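/- arXiv:2010.06759 — 4 statements merged into one kernel-verified Lean document; each statement's English description precedes it below -/
import Mathlib

section
/- Let X ⊆ ℝ^d, let N be a finite index set, let P be a nonempty subset of the standard simplex Δ^N, and let Q_n : X → ℝ for n ∈ N. Define Q(x) = sup_{p ∈ P} Σ_{n ∈ N} p_n Q_n(x) and assume Q is L-Lipschitz on X with L > 0. Fix p⁰ ∈ P and for each n ∈ N let V_n : ℝ^d → ℝ be an affine function V_n(x) = v_n + ⟨λ_n, x - x̂⟩ with ‖λ_n‖ ≤ l'_n and V_n(x) ≤ Q_n(x) for all x ∈ X. Set V(x) = Σ_{n ∈ N} p⁰_n V_n(x) and L' = Σ_{n ∈ N} p⁰_n l'_n. Then: (i) V(x) ≤ Q(x) for all x ∈ X; (ii) V is L'-Lipschitz; and (iii) for any x⁰ ∈ X, setting γ = Q(x⁰) - V(x⁰), for every δ > γ and every x ∈ X with ‖x - x⁰‖ ≤ (δ - γ)/(L + L'), one has Q(x) ≤ V(x) + δ. -/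
open scoped RealInnerProductSpace

/-- A convex combination of valid linear cuts for the value
functions is a valid Lipschitz cut for the worst-case expected cost-to-go
function, and the approximation gap propagates to a neighborhood. -/
theorem stmt3 {d : ℕ} (X : Set (EuclideanSpace ℝ (Fin d)))
    {N : Type*} [Fintype N]
    (P : Set (N → ℝ)) (hPne : P.Nonempty)
    (hPsub : P ⊆ {p : N → ℝ | (∀ n, 0 ≤ p n) ∧ ∑ n, p n = 1})
    (Qn : N → EuclideanSpace ℝ (Fin d) → ℝ)
    (Q : EuclideanSpace ℝ (Fin d) → ℝ)
    (hQ : ∀ x, Q x = sSup {s : ℝ | ∃ p ∈ P, s = ∑ n, p n * Qn n x})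
    (L : ℝ) (hL : 0 < L)
    (hQlip : ∀ x ∈ X, ∀ y ∈ X, |Q x - Q y| ≤ L * ‖x - y‖)
    (p0 : N → ℝ) (hp0 : p0 ∈ P)
    (xhat : EuclideanSpace ℝ (Fin d)) (v : N → ℝ)
    (lam : N → EuclideanSpace ℝ (Fin d)) (l' : N → ℝ)
    (hlam : ∀ n, ‖lam n‖ ≤ l' n)
    (Vn : N → EuclideanSpace ℝ (Fin d) → ℝ)
    (hVn : ∀ n x, Vn n x = v n + ⟪lam n, x - xhat⟫)
    (hVnQn : ∀ n, ∀ x ∈ X, Vn n x ≤ Qn n x)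
    (V : EuclideanSpace ℝ (Fin d) → ℝ)
    (hV : ∀ x, V x = ∑ n, p0 n * Vn n x)
    (L' : ℝ) (hL' : L' = ∑ n, p0 n * l' n) :
    (∀ x ∈ X, V x ≤ Q x) ∧
    (∀ x y, |V x - V y| ≤ L' * ‖x - y‖) ∧
    (∀ x0 ∈ X, ∀ δ : ℝ, Q x0 - V x0 < δ →
      ∀ x ∈ X, ‖x - x0‖ ≤ (δ - (Q x0 - V x0)) / (L + L') → Q x ≤ V x + δ) := by

  have hp0' := hPsub hp0
  have hp0nn : ∀ n, 0 ≤ p0 n := hp0'.1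
  have hl'nn : ∀ n, 0 ≤ l' n := fun n => (norm_nonneg _).trans (hlam n)
  have hL'nn : 0 ≤ L' := by
    rw [hL']; exact Finset.sum_nonneg fun n _ => mul_nonneg (hp0nn n) (hl'nn n)
  -- (ii)
  have hVlip : ∀ x y, |V x - V y| ≤ L' * ‖x - y‖ := by
    intro x y
    have hdiff : V x - V y = ∑ n, p0 n * ⟪lam n, x - y⟫ := by
      rw [hV, hV, ← Finset.sum_sub_distrib]
      refine Finset.sum_congr rfl fun n _ => ?_
      rw [hVn, hVn, ← mul_sub]
      have : (v n + ⟪lam n, x - xhat⟫) - (v n + ⟪lam n, y - xhat⟫)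
          = ⟪lam n, (x - xhat) - (y - xhat)⟫ := by simp only [inner_sub_right]; ring
      rw [this]
      congr 1
      abel
    rw [hdiff]
    calc |∑ n, p0 n * ⟪lam n, x - y⟫| ≤ ∑ n, |p0 n * ⟪lam n, x - y⟫| :=
          Finset.abs_sum_le_sum_abs _ _
      _ ≤ ∑ n, p0 n * l' n * ‖x - y‖ := by
          refine Finset.sum_le_sum fun n _ => ?_
          rw [abs_mul, abs_of_nonneg (hp0nn n), mul_assoc]
          refine mul_le_mul_of_nonneg_left ?_ (hp0nn n)
          calc |⟪lam n, x - y⟫| ≤ ‖lam n‖ * ‖x - y‖ := abs_real_inner_le_norm _ _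
            _ ≤ l' n * ‖x - y‖ := mul_le_mul_of_nonneg_right (hlam n) (norm_nonneg _)
      _ = L' * ‖x - y‖ := by rw [hL', Finset.sum_mul]
  -- (i)
  have hVQ : ∀ x ∈ X, V x ≤ Q x := by
    intro x hx
    have hbdd : BddAbove {s : ℝ | ∃ p ∈ P, s = ∑ n, p n * Qn n x} := by
      refine ⟨∑ n, |Qn n x|, ?_⟩
      rintro s ⟨p, hp, rfl⟩
      obtain ⟨hpnn, hpsum⟩ := hPsub hp
      refine Finset.sum_le_sum fun n _ => ?_
      have hpn1 : p n ≤ 1 := by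
        calc p n ≤ ∑ m, p m :=
              Finset.single_le_sum (fun m _ => hpnn m) (Finset.mem_univ n)
          _ = 1 := hpsum
      calc p n * Qn n x ≤ p n * |Qn n x| :=
            mul_le_mul_of_nonneg_left (le_abs_self _) (hpnn n)
        _ ≤ |Qn n x| := mul_le_of_le_one_left (abs_nonneg _) hpn1
    have hmem : (∑ n, p0 n * Qn n x) ∈ {s : ℝ | ∃ p ∈ P, s = ∑ n, p n * Qn n x} :=
      ⟨p0, hp0, rfl⟩
    have : V x ≤ ∑ n, p0 n * Qn n x := by
      rw [hV]
      exact Finset.sum_le_sum fun n _ =>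
        mul_le_mul_of_nonneg_left (hVnQn n x hx) (hp0nn n)
    exact this.trans ((hQ x) ▸ le_csSup hbdd hmem)
  refine ⟨hVQ, hVlip, ?_⟩
  intro x0 hx0 δ hδ x hx hdist
  have h1 : Q x - Q x0 ≤ L * ‖x - x0‖ := (le_abs_self _).trans (hQlip x hx x0 hx0)
  have h2 : V x0 - V x ≤ L' * ‖x - x0‖ := by
    have := (le_abs_self (V x0 - V x)).trans (hVlip x0 x)
    rwa [norm_sub_rev] at this
  have hsum : 0 < L + L' := by linarith
  have h3 : ‖x - x0‖ * (L + L') ≤ δ - (Q x0 - V x0) := by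
    rw [← le_div_iff₀ hsum]; exact hdist
  nlinarith [norm_nonneg (x - x0)]
end

section
/- Let d ≥ 2 be an integer, r > 0, and 0 < θ < (1 - √2/2) r. Then there exists a finite set of points W ⊆ S^d(r) with |W| ≥ ((d² - 1)√π / d) · (Γ(d/2 + 1) / Γ(d/2 + 3/2)) · (r/(2θ))^{(d-1)/2} such that for every w ∈ W, the spherical cap S^d_θ(r, w) intersects W only in {w} (i.e., S^d_θ(r, w) ∩ W = {w}). -/
/-!
Rescale to the unit sphere and put `u = θ / r`. A maximal family `M` of unit vectors with pairwise
inner products `< 1 - u` is finite, and every unit vector `y` has some `w ∈ M` with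
`⟪y, w⟫ ≥ 1 - u`. Hence the cones `{x | ‖x‖ ≤ 1, (1 - u) ‖x‖ ≤ ⟪x, w⟫}` cover the unit ball of
`ℝ^(d+1)` up to the origin, so `|M|` is at least the volume of the ball divided by the volume of
one cone. By Cavalieri's principle along the axis `w`, that volume is at most
`vol(Bᵈ) · √(2u)ᵈ (1 + u) / (d + 1)`, and `u < 1 - √2/2` gives `√(2u) (1 + u) ≤ 1`, which absorbs
the factor `(d² - 1) / d` against `d + 1`.
-/

open scoped RealInnerProductSpace NNReal ENNReal
open Metric MeasureTheory Set Real

lemma IsCompact.packingNumber_ne_top {X : Type*} [PseudoEMetricSpace X] {A : Set X}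
    (hA : IsCompact A) {ε : ℝ≥0} (hε : ε ≠ 0) : packingNumber ε A ≠ ⊤ := by
  obtain ⟨C, -, hCfin, hC⟩ := exists_finite_isCover_of_isCompact (ε := ε / 2) (by simpa) hA
  have := packingNumber_two_mul_le_externalCoveringNumber (ε / 2) A
  rw [mul_div_cancel₀ _ two_ne_zero] at this
  exact (this.trans hC.externalCoveringNumber_le_encard).trans_lt hCfin.encard_lt_top |>.ne

section

variable {E : Type*} [NormedAddCommGroup E] [InnerProductSpace ℝ E]

lemma dist_sq_eq_two_sub_two_inner {x y : E} (hx : ‖x‖ = 1) (hy : ‖y‖ = 1) :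
    dist x y ^ 2 = 2 - 2 * ⟪x, y⟫ := by
  rw [dist_eq_norm, norm_sub_sq_real, hx, hy]; ring

lemma edist_le_ofReal_sqrt_iff_le_inner {x y : E} (hx : ‖x‖ = 1) (hy : ‖y‖ = 1) {β : ℝ}
    (hβ : β ≤ 1) :
    edist x y ≤ ENNReal.ofReal √(2 - 2 * β) ↔ β ≤ ⟪x, y⟫ := by
  rw [edist_le_ofReal (Real.sqrt_nonneg _), Real.le_sqrt dist_nonneg (by linarith),
    dist_sq_eq_two_sub_two_inner hx hy]
  constructor <;> intro h <;> linarith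

theorem exists_finset_unit_separated_covering [FiniteDimensional ℝ E] {β : ℝ} (hβ : β < 1) :
    ∃ M : Finset E, (∀ w ∈ M, ‖w‖ = 1) ∧ (∀ w ∈ M, ∀ y ∈ M, β ≤ ⟪y, w⟫ → y = w) ∧
      ∀ y, ‖y‖ = 1 → ∃ w ∈ M, β ≤ ⟪y, w⟫ := by
  set ε : ℝ≥0 := (√(2 - 2 * β)).toNNReal
  have hε : ε ≠ 0 := by simp [ε]; linarith
  have hpack := (isCompact_sphere (0 : E) 1).packingNumber_ne_top hε
  set S := maximalSeparatedSet ε (sphere (0 : E) 1)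
  have hS : S.Finite := by
    rw [← Set.encard_ne_top_iff, encard_maximalSeparatedSet hpack]; exact hpack
  have hunit : ∀ w ∈ S, ‖w‖ = 1 := fun w hw ↦ by
    simpa using maximalSeparatedSet_subset hw
  refine ⟨hS.toFinset, fun w hw ↦ hunit w (hS.mem_toFinset.mp hw), ?_, ?_⟩
  · intro w hw y hy hβy
    rw [Set.Finite.mem_toFinset] at hw hy
    by_contra hne
    exact (isSeparated_maximalSeparatedSet hy hw hne).not_ge
      ((edist_le_ofReal_sqrt_iff_le_inner (hunit y hy) (hunit w hw) hβ.le).mpr hβy)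
  · intro y hy
    obtain ⟨w, hw, hyw⟩ := isCover_maximalSeparatedSet hpack (by simpa using hy)
    exact ⟨w, hS.mem_toFinset.mpr hw,
      (edist_le_ofReal_sqrt_iff_le_inner hy (hunit w hw) hβ.le).mp hyw⟩

def capCone (β : ℝ) (w : E) : Set E := {x | ‖x‖ ≤ 1 ∧ β * ‖x‖ ≤ ⟪x, w⟫}

theorem LinearIsometryEquiv.preimage_capCone {F : Type*} [NormedAddCommGroup F]
    [InnerProductSpace ℝ F] (e : E ≃ₗᵢ[ℝ] F) (β : ℝ) (w : E) :
    e ⁻¹' capCone β (e w) = capCone β w := by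
  ext x
  simp [capCone]

theorem isClosed_capCone (β : ℝ) (w : E) : IsClosed (capCone β w) :=
  (isClosed_le continuous_norm continuous_const).inter
    (isClosed_le (continuous_const.mul continuous_norm) (continuous_id.inner continuous_const))

theorem measure_ball_le_card_mul [MeasurableSpace E] {μ : Measure E} [NullSingletonClass μ]
    {M : Finset E} {β : ℝ} {c : ℝ≥0∞} (hcov : ∀ y : E, ‖y‖ = 1 → ∃ w ∈ M, β ≤ ⟪y, w⟫)
    (hc : ∀ w ∈ M, μ (capCone β w) ≤ c) : μ (ball 0 1) ≤ M.card * c := by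
  have hsub : ball (0 : E) 1 \ {0} ⊆ ⋃ w ∈ M, capCone β w := by
    rintro x ⟨hx1, hx0 : x ≠ 0⟩
    rw [mem_ball_zero_iff] at hx1
    have hxpos : 0 < ‖x‖ := norm_pos_iff.mpr hx0
    obtain ⟨w, hwM, hw⟩ := hcov (‖x‖⁻¹ • x) (by simp [norm_smul, hxpos.ne'])
    rw [real_inner_smul_left, le_inv_mul_iff₀ hxpos, mul_comm] at hw
    exact mem_iUnion₂.mpr ⟨w, hwM, hx1.le, hw⟩
  calc μ (ball 0 1) = μ (ball 0 1 \ {0}) := (measure_sdiff_null (measure_singleton 0)).symm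
    _ ≤ ∑ w ∈ M, μ (capCone β w) := (measure_mono hsub).trans (measure_biUnion_finset_le M _)
    _ ≤ M.card * c := by simpa using Finset.sum_le_card_nsmul M _ c hc

end

def solidOfRevolution (d : ℕ) (A : Set ℝ) (f : ℝ → ℝ) : Set (EuclideanSpace ℝ (Fin (d + 1))) :=
  {X | X 0 ∈ A ∧ ‖X‖ ^ 2 ≤ X 0 ^ 2 + f (X 0) ^ 2}

theorem volume_solidOfRevolution (d : ℕ) {A : Set ℝ} (hA : MeasurableSet A) {f : ℝ → ℝ}
    (hf : Measurable f) (hf0 : ∀ t ∈ A, 0 ≤ f t) :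
    volume (solidOfRevolution d A f) =
      ∫⁻ t in A, volume (closedBall (0 : EuclideanSpace ℝ (Fin d)) (f t)) := by
  let φ : EuclideanSpace ℝ (Fin (d + 1)) ≃ᵐ ℝ × (Fin d → ℝ) :=
    (MeasurableEquiv.toLp 2 _).symm.trans (MeasurableEquiv.piFinSuccAbove (fun _ ↦ ℝ) 0)
  have hφ : MeasurePreserving φ volume volume :=
    (volume_preserving_piFinSuccAbove (fun _ ↦ ℝ) 0).comp
      (EuclideanSpace.volume_preserving_symm_measurableEquiv_toLp _)
  let T : Set (ℝ × (Fin d → ℝ)) := {p | p.1 ∈ A ∧ WithLp.toLp 2 p.2 ∈ closedBall 0 (f p.1)}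
  have hT : MeasurableSet T :=
    (measurable_fst hA).inter (measurableSet_le (by fun_prop) (hf.comp measurable_fst))
  have hpre : solidOfRevolution d A f = φ ⁻¹' T := by
    ext X
    have hφX : φ X = (X 0, fun i ↦ X i.succ) := rfl
    simp only [solidOfRevolution, T, mem_ofPred_eq, mem_preimage, hφX, mem_closedBall_zero_iff]
    refine and_congr_right fun hX ↦ ?_
    rw [← sq_le_sq₀ (norm_nonneg _) (hf0 _ hX), EuclideanSpace.norm_sq_eq,
      EuclideanSpace.norm_sq_eq, Fin.sum_univ_succ]
    simp
  have hslice (t : ℝ) : volume (Prod.mk t ⁻¹' T) =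
      A.indicator (fun t ↦ volume (closedBall (0 : EuclideanSpace ℝ (Fin d)) (f t))) t := by
    by_cases ht : t ∈ A
    · rw [indicator_of_mem ht, ← (PiLp.volume_preserving_toLp _).measure_preimage
        measurableSet_closedBall.nullMeasurableSet]
      congr 1
      ext v
      simp [T, ht]
    · simp [T, ht]
  rw [hpre, hφ.measure_preimage hT.nullMeasurableSet, Measure.volume_eq_prod,
    Measure.prod_apply hT]
  simp_rw [hslice]
  exact lintegral_indicator hA _

theorem volume_solidOfRevolution_Icc (d : ℕ) [NeZero d] {a b : ℝ} (hab : a ≤ b) {f : ℝ → ℝ}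
    (hf : Continuous f) (hf0 : ∀ t ∈ Icc a b, 0 ≤ f t) :
    volume (solidOfRevolution d (Icc a b) f) =
      ENNReal.ofReal (√π ^ d / Gamma (d / 2 + 1) * ∫ t in a..b, f t ^ d) := by
  have hc : 0 ≤ √π ^ d / Gamma (d / 2 + 1) := by
    have := Gamma_pos_of_pos (by positivity : (0 : ℝ) < d / 2 + 1)
    positivity
  have hball : ∀ t ∈ Icc a b, volume (closedBall (0 : EuclideanSpace ℝ (Fin d)) (f t)) =
      ENNReal.ofReal (√π ^ d / Gamma (d / 2 + 1) * f t ^ d) := fun t ht ↦ by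
    rw [EuclideanSpace.volume_closedBall, Fintype.card_fin, ← ENNReal.ofReal_pow (hf0 t ht),
      ← ENNReal.ofReal_mul (pow_nonneg (hf0 t ht) d), mul_comm]
  rw [volume_solidOfRevolution d measurableSet_Icc hf.measurable hf0,
    setLIntegral_congr_fun measurableSet_Icc hball, ← intervalIntegral.integral_const_mul,
    intervalIntegral.integral_of_le hab, ofReal_integral_eq_lintegral_ofReal,
    Measure.restrict_congr_set Ioc_ae_eq_Icc]
  · exact (by fun_prop : Continuous fun t ↦ √π ^ d / Gamma (d / 2 + 1) * f t ^ d)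
      |>.integrableOn_Icc.mono_set Ioc_subset_Icc_self
  · filter_upwards [ae_restrict_mem measurableSet_Ioc] with t ht
    exact mul_nonneg hc (pow_nonneg (hf0 t (Ioc_subset_Icc_self ht)) d)

theorem integral_mul_pow (n : ℕ) (c b : ℝ) :
    ∫ t in (0 : ℝ)..b, (c * t) ^ n = c ^ n * b ^ (n + 1) / (n + 1) := by
  simp [mul_pow, integral_pow, mul_div_assoc]

lemma sqrt_pow_eq_rpow (n : ℕ) {y : ℝ} (hy : 0 ≤ y) : √y ^ n = y ^ ((n : ℝ) / 2) := by
  rw [sqrt_eq_rpow, ← rpow_natCast, ← rpow_mul hy]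
  ring_nf

theorem integral_sqrt_pow (n : ℕ) {b : ℝ} (hb : 0 ≤ b) :
    ∫ y in (0 : ℝ)..b, √y ^ n = 2 * √b ^ (n + 2) / (n + 2) := by
  have hn : (0 : ℝ) < n / 2 + 1 := by positivity
  rw [intervalIntegral.integral_congr (g := fun y ↦ y ^ ((n : ℝ) / 2)) fun y hy ↦
      sqrt_pow_eq_rpow n (by rw [Set.uIcc_of_le hb] at hy; exact hy.1),
    integral_rpow (Or.inl (by linarith)), zero_rpow hn.ne', sqrt_pow_eq_rpow _ hb]
  push_cast
  field_simp
  ring_nf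

theorem integral_sqrt_two_mul_one_sub_pow (n : ℕ) {u : ℝ} (hu : 0 ≤ u) :
    ∫ t in (1 - u)..1, √(2 * (1 - t)) ^ n = √(2 * u) ^ (n + 2) / (n + 2) := by
  rw [intervalIntegral.integral_comp_sub_left (fun s ↦ √(2 * s) ^ n) 1,
    intervalIntegral.integral_comp_mul_left (fun y ↦ √y ^ n) two_ne_zero, sub_self, mul_zero,
    sub_sub_cancel, integral_sqrt_pow n (by linarith), smul_eq_mul]
  ring

theorem sqrt_two_mul_mul_one_add_le_one {u : ℝ} (hu0 : 0 ≤ u) (hu : u ≤ 1 - √2 / 2) :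
    √(2 * u) * (1 + u) ≤ 1 := by
  have hsqrt2 : (1.41 : ℝ) ≤ √2 := Real.le_sqrt_of_sq_le (by norm_num)
  rw [← Real.sqrt_sq (by linarith : 0 ≤ 1 + u), ← Real.sqrt_mul (by linarith)]
  exact Real.sqrt_le_one.mpr (by nlinarith)

section

variable {E : Type*} [NormedAddCommGroup E] [InnerProductSpace ℝ E]

theorem exists_linearIsometryEquiv_apply_eq_single [FiniteDimensional ℝ E] {n : ℕ}
    (hE : Module.finrank ℝ E = n + 1) {w : E} (hw : ‖w‖ = 1) :
    ∃ e : E ≃ₗᵢ[ℝ] EuclideanSpace ℝ (Fin (n + 1)), e w = EuclideanSpace.single 0 1 := by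
  have hv : Orthonormal ℝ (({0} : Set (Fin (n + 1))).domRestrict fun _ ↦ w) :=
    ⟨fun _ ↦ hw, fun i j hij ↦ (hij (Subsingleton.elim i j)).elim⟩
  obtain ⟨b, hb⟩ := hv.exists_orthonormalBasis_extension_of_card_eq (by simpa using hE)
  exact ⟨b.repr, by rw [← hb 0 rfl, b.repr_self]⟩

/-- On `[0, 1 - u]` the cone's slope `√(1 - (1 - u)²) / (1 - u)` is enlarged to `√(2u) / (1 - u)`,
and on `[1 - u, 1]` the ball's profile `√(1 - t²)` to `√(2(1 - t))`, whose powers integrate in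
closed form. -/
theorem capCone_single_subset (d : ℕ) {u : ℝ} (hu0 : 0 < u) (hu1 : u < 1) :
    capCone (1 - u) (EuclideanSpace.single 0 1 : EuclideanSpace ℝ (Fin (d + 1))) ⊆
      solidOfRevolution d (Icc 0 (1 - u)) (fun t ↦ √(2 * u) / (1 - u) * t) ∪
        solidOfRevolution d (Icc (1 - u) 1) (fun t ↦ √(2 * (1 - t))) := by
  rintro X ⟨hX1, hXw⟩
  rw [EuclideanSpace.inner_single_right, one_mul, conj_trivial] at hXw
  have hX0 : 0 ≤ X 0 := (mul_nonneg (by linarith) (norm_nonneg X)).trans hXw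
  have hX0X : X 0 ≤ ‖X‖ := (le_abs_self _).trans (PiLp.norm_apply_le X 0)
  rcases le_total (X 0) (1 - u) with h | h
  · refine Or.inl ⟨⟨hX0, h⟩, ?_⟩
    have hβ : 0 < 1 - u := by linarith
    rw [mul_pow, div_pow, Real.sq_sqrt (by positivity)]
    field_simp
    calc ‖X‖ ^ 2 * (1 - u) ^ 2 = ((1 - u) * ‖X‖) ^ 2 := by ring
      _ ≤ X 0 ^ 2 := pow_le_pow_left₀ (by positivity) hXw 2
      _ ≤ X 0 ^ 2 * ((1 - u) ^ 2 + 2 * u) := by nlinarith [sq_nonneg (u * X 0)]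
  · refine Or.inr ⟨⟨h, by linarith⟩, ?_⟩
    rw [Real.sq_sqrt (by linarith)]
    nlinarith [norm_nonneg X]

theorem volume_capCone_single_le (d : ℕ) [NeZero d] {u : ℝ} (hu0 : 0 < u) (hu1 : u < 1) :
    volume (capCone (1 - u) (EuclideanSpace.single 0 1 : EuclideanSpace ℝ (Fin (d + 1)))) ≤
      ENNReal.ofReal (√π ^ d / Gamma (d / 2 + 1) * (√(2 * u) ^ d * (1 + u) / (d + 1))) := by
  set c := √π ^ d / Gamma (d / 2 + 1)
  have hc : 0 ≤ c := by
    have := Gamma_pos_of_pos (by positivity : (0 : ℝ) < d / 2 + 1)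
    positivity
  have hβ : 0 < 1 - u := by linarith
  have hτ : √(2 * u) ^ 2 = 2 * u := Real.sq_sqrt (by positivity)
  have hcone : volume (solidOfRevolution d (Icc 0 (1 - u)) fun t ↦ √(2 * u) / (1 - u) * t) =
      ENNReal.ofReal (c * (√(2 * u) ^ d * (1 - u) / (d + 1))) := by
    rw [volume_solidOfRevolution_Icc d hβ.le (by fun_prop) fun t ht ↦ by have := ht.1; positivity,
      integral_mul_pow]
    congr 2
    rw [div_pow, pow_succ]
    field_simp
  have hcap : volume (solidOfRevolution d (Icc (1 - u) 1) fun t ↦ √(2 * (1 - t))) =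
      ENNReal.ofReal (c * (√(2 * u) ^ (d + 2) / (d + 2))) := by
    rw [volume_solidOfRevolution_Icc d (by linarith) (by fun_prop) fun t _ ↦ Real.sqrt_nonneg _,
      integral_sqrt_two_mul_one_sub_pow d hu0.le]
  have hsum : √(2 * u) ^ d * (1 - u) / (d + 1) + √(2 * u) ^ (d + 2) / (d + 2) ≤
      √(2 * u) ^ d * (1 + u) / (d + 1) := by
    rw [pow_add, hτ]
    have : 2 * u / (d + 2) ≤ 2 * u / (d + 1) := by gcongr; linarith
    calc √(2 * u) ^ d * (1 - u) / (d + 1) + √(2 * u) ^ d * (2 * u) / (d + 2)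
        = √(2 * u) ^ d * ((1 - u) / (d + 1) + 2 * u / (d + 2)) := by ring
      _ ≤ √(2 * u) ^ d * ((1 - u) / (d + 1) + 2 * u / (d + 1)) := by gcongr
      _ = √(2 * u) ^ d * (1 + u) / (d + 1) := by ring
  calc _ ≤ _ := measure_mono (capCone_single_subset d hu0 hu1)
    _ ≤ _ := measure_union_le _ _
    _ = ENNReal.ofReal (c * (√(2 * u) ^ d * (1 - u) / (d + 1) + √(2 * u) ^ (d + 2) / (d + 2))) := by
      rw [hcone, hcap, mul_add, ENNReal.ofReal_add (by positivity) (by positivity)]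
    _ ≤ _ := ENNReal.ofReal_le_ofReal (by gcongr)

theorem volume_capCone_le [FiniteDimensional ℝ E] [MeasurableSpace E] [BorelSpace E] {d : ℕ}
    [NeZero d] (hE : Module.finrank ℝ E = d + 1) {u : ℝ} (hu0 : 0 < u) (hu1 : u < 1) {w : E}
    (hw : ‖w‖ = 1) :
    volume (capCone (1 - u) w) ≤
      ENNReal.ofReal (√π ^ d / Gamma (d / 2 + 1) * (√(2 * u) ^ d * (1 + u) / (d + 1))) := by
  obtain ⟨e, he⟩ := exists_linearIsometryEquiv_apply_eq_single hE hw
  rw [← e.preimage_capCone, he, e.measurePreserving.measure_preimage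
    (isClosed_capCone _ _).measurableSet.nullMeasurableSet]
  exact volume_capCone_single_le d hu0 hu1

theorem sqrt_pi_mul_Gamma_div_Gamma_le_card_mul [FiniteDimensional ℝ E] [MeasurableSpace E]
    [BorelSpace E] {d : ℕ} [NeZero d] (hE : Module.finrank ℝ E = d + 1) {u : ℝ} (hu0 : 0 < u)
    (hu1 : u < 1) {M : Finset E} (hM : ∀ w ∈ M, ‖w‖ = 1)
    (hcov : ∀ y : E, ‖y‖ = 1 → ∃ w ∈ M, 1 - u ≤ ⟪y, w⟫) :
    √π * (Gamma (d / 2 + 1) / Gamma (d / 2 + 3 / 2)) ≤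
      M.card * (√(2 * u) ^ d * (1 + u) / (d + 1)) := by
  have : Nontrivial E := Module.nontrivial_of_finrank_pos (by rw [hE]; omega)
  have hG := Gamma_pos_of_pos (by positivity : (0 : ℝ) < d / 2 + 1)
  have hH := Gamma_pos_of_pos (by positivity : (0 : ℝ) < d / 2 + 3 / 2)
  have hvol := measure_ball_le_card_mul (μ := volume) hcov fun w hw ↦
    volume_capCone_le hE hu0 hu1 (hM w hw)
  rw [InnerProductSpace.volume_ball, hE, ENNReal.ofReal_one, one_pow, one_mul,
    ← ENNReal.ofReal_natCast, ← ENNReal.ofReal_mul (by positivity),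
    ENNReal.ofReal_le_ofReal_iff (by positivity)] at hvol
  have hΓ : Gamma (((d + 1 : ℕ) : ℝ) / 2 + 1) = Gamma (d / 2 + 3 / 2) := by push_cast; ring_nf
  rw [hΓ, pow_succ] at hvol
  have hv : 0 < √π ^ d / Gamma (d / 2 + 1) := by positivity
  rw [← mul_le_mul_iff_of_pos_left hv]
  calc _ = √π ^ d * √π / Gamma (d / 2 + 3 / 2) := by field_simp
    _ ≤ _ := hvol
    _ = _ := by ring

theorem le_card_of_forall_exists_inner_ge [FiniteDimensional ℝ E] [MeasurableSpace E]
    [BorelSpace E] {d : ℕ} (hd : 1 ≤ d) (hE : Module.finrank ℝ E = d + 1) {u : ℝ} (hu0 : 0 < u)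
    (hu : u < 1 - √2 / 2) {M : Finset E} (hM : ∀ w ∈ M, ‖w‖ = 1)
    (hcov : ∀ y : E, ‖y‖ = 1 → ∃ w ∈ M, 1 - u ≤ ⟪y, w⟫) :
    ((d : ℝ) ^ 2 - 1) * √π / d * (Gamma (d / 2 + 1) / Gamma (d / 2 + 3 / 2)) *
      (2 * u)⁻¹ ^ (((d : ℝ) - 1) / 2) ≤ M.card := by
  have : NeZero d := ⟨by omega⟩
  have hsqrt2 : (1.41 : ℝ) ≤ √2 := Real.le_sqrt_of_sq_le (by norm_num)
  have hbound := sqrt_pi_mul_Gamma_div_Gamma_le_card_mul hE hu0 (by linarith) hM hcov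
  have hkey := sqrt_two_mul_mul_one_add_le_one hu0.le hu.le
  have hdR : (1 : ℝ) ≤ d := by exact_mod_cast hd
  set τ := √(2 * u)
  have hτ : 0 < τ := Real.sqrt_pos.mpr (by linarith)
  have hpow : (2 * u)⁻¹ ^ (((d : ℝ) - 1) / 2) = (τ ^ (d - 1))⁻¹ := by
    rw [Real.inv_rpow (by linarith), sqrt_pow_eq_rpow _ (by linarith), Nat.cast_sub hd,
      Nat.cast_one]
  have hτd : τ ^ d = τ ^ (d - 1) * τ := by rw [← pow_succ, Nat.sub_add_cancel hd]
  rw [hpow]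
  calc _ = (d - 1) / d * (d + 1) * (√π * (Gamma (d / 2 + 1) / Gamma (d / 2 + 3 / 2))) /
        τ ^ (d - 1) := by ring
    _ ≤ (d - 1) / d * (d + 1) * (M.card * (τ ^ d * (1 + u) / (d + 1))) / τ ^ (d - 1) := by
        gcongr
    _ = M.card * ((d - 1) / d * (τ * (1 + u))) := by
        rw [hτd]
        field_simp
    _ ≤ M.card * 1 := by
        gcongr
        exact mul_le_one₀ (div_le_one_of_le₀ (by linarith) (by linarith)) (by positivity) hkey
    _ = M.card := mul_one _

end

/-- Spherical cap packing lemma: on the `d`-sphere of radius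
`r` in `ℝ^(d+1)`, for cap depth `0 < θ < (1 - √2/2) r`, there is a finite set
`W` of points of the sphere with
`|W| ≥ ((d²-1)√π/d) (Γ(d/2+1)/Γ(d/2+3/2)) (r/(2θ))^((d-1)/2)`
such that the depth-`θ` cap centered at any `w ∈ W` contains no other point
of `W`. -/
theorem stmt10 (d : ℕ) (hd : 2 ≤ d) (r θ : ℝ) (hr : 0 < r)
    (hθ0 : 0 < θ) (hθ : θ < (1 - Real.sqrt 2 / 2) * r) :
    ∃ W : Finset (EuclideanSpace ℝ (Fin (d + 1))),
      (∀ w ∈ W, ‖w‖ = r) ∧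
      (((d : ℝ) ^ 2 - 1) * Real.sqrt Real.pi / d *
          (Real.Gamma ((d : ℝ) / 2 + 1) / Real.Gamma ((d : ℝ) / 2 + 3 / 2)) *
          (r / (2 * θ)) ^ (((d : ℝ) - 1) / 2) ≤ (W.card : ℝ)) ∧
      (∀ w ∈ W, ∀ y ∈ W, ⟪y - w, w⟫ ≥ -θ * r → y = w) := by
  have hu0 : 0 < θ / r := div_pos hθ0 hr
  have hu : θ / r < 1 - √2 / 2 := (div_lt_iff₀ hr).mpr hθ
  obtain ⟨M, hM, hsep, hcov⟩ := exists_finset_unit_separated_covering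
    (E := EuclideanSpace ℝ (Fin (d + 1))) (β := 1 - θ / r) (by linarith)
  refine ⟨M.image (r • ·), ?_, ?_, ?_⟩
  · simp only [Finset.mem_image]
    rintro _ ⟨w, hw, rfl⟩
    rw [norm_smul, hM w hw, Real.norm_of_nonneg hr.le, mul_one]
  · rw [Finset.card_image_of_injective M (smul_right_injective _ hr.ne'),
      show r / (2 * θ) = (2 * (θ / r))⁻¹ by field_simp]
    exact le_card_of_forall_exists_inner_ge (by omega) finrank_euclideanSpace_fin hu0 hu hM hcov
  · simp only [Finset.mem_image]
    rintro _ ⟨w, hw, rfl⟩ _ ⟨y, hy, rfl⟩ hyw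
    rw [← smul_sub, real_inner_smul_left, real_inner_smul_right, inner_sub_left,
      real_inner_self_eq_norm_sq, hM w hw, one_pow] at hyw
    have : -θ ≤ r * (⟪y, w⟫ - 1) := le_of_mul_le_mul_left (by linarith) hr
    rw [hsep w hw y hy (sub_le_comm.mp ((le_div_iff₀ hr).mpr (by linarith)))]
end

section
/- Let r > 0, l > 0, θ > 0, ε > 0 with lθ ≥ ε, and let w_1, …, w_K ∈ ℝ^d satisfy ‖w_k‖ = r for all k and ⟨w_{k'} - w_k, w_k⟩ < -θ r for all k' ≠ k. Let v_1, …, v_K ∈ (ε/2, ε) and define F : ℝ^d → ℝ by F(x) = max_{1 ≤ k ≤ K} max{ 0, v_k + (l/r)⟨w_k, x - w_k⟩ }. Then: (i) F is convex; (ii) F is l-Lipschitz continuous; and (iii) F(w_k) = v_k for every k ∈ {1, …, K}. -/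
open scoped RealInnerProductSpace

/-- Properties of the piecewise-linear convex functions used in
the complexity lower bound construction:
`F x = max_k max{0, v_k + (l/r)⟨w_k, x - w_k⟩}` is convex, `l`-Lipschitz, and
interpolates the prescribed values: `F (w_k) = v_k`. -/
theorem stmt11 {d K : ℕ} (hK : 0 < K) (r l θ ε : ℝ)
    (hr : 0 < r) (hl : 0 < l) (hθ : 0 < θ) (hε : 0 < ε) (hlθ : ε ≤ l * θ)
    (w : Fin K → EuclideanSpace ℝ (Fin d)) (hw : ∀ k, ‖w k‖ = r)
    (hsep : ∀ k k' : Fin K, k' ≠ k → ⟪w k' - w k, w k⟫ < -θ * r)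
    (v : Fin K → ℝ) (hv : ∀ k, ε / 2 < v k ∧ v k < ε)
    (F : EuclideanSpace ℝ (Fin d) → ℝ)
    (hF : ∀ x, F x = ⨆ k : Fin K, max 0 (v k + (l / r) * ⟪w k, x - w k⟫)) :
    ConvexOn ℝ Set.univ F ∧ (∀ x y, |F x - F y| ≤ l * ‖x - y‖) ∧
      (∀ k : Fin K, F (w k) = v k) := by
  haveI : Nonempty (Fin K) := ⟨⟨0, hK⟩⟩
  set c : ℝ := l / r with hcdef
  have hc : 0 < c := div_pos hl hr
  set g : Fin K → EuclideanSpace ℝ (Fin d) → ℝ :=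
    fun k x => max 0 (v k + c * ⟪w k, x - w k⟫) with hg
  have hbdd : ∀ x, BddAbove (Set.range fun k => g k x) :=
    fun x => (Set.finite_range _).bddAbove
  have hFg : ∀ x, F x = ⨆ k, g k x := hF
  -- affine identity
  have haff : ∀ (k : Fin K) (x y : EuclideanSpace ℝ (Fin d)) (a b : ℝ), a + b = 1 →
      ⟪w k, (a • x + b • y) - w k⟫ =
        a * ⟪w k, x - w k⟫ + b * ⟪w k, y - w k⟫ := by
    intro k x y a b hab
    rw [inner_sub_right, inner_add_right, real_inner_smul_right, real_inner_smul_right,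
      inner_sub_right, inner_sub_right]
    linear_combination (⟪w k, w k⟫ : ℝ) * hab
  -- per-term Lipschitz bound
  have hlip : ∀ (k : Fin K) (x y : EuclideanSpace ℝ (Fin d)),
      g k x ≤ g k y + l * ‖x - y‖ := by
    intro k x y
    have h1 : |g k x - g k y| ≤ |(v k + c * ⟪w k, x - w k⟫) - (v k + c * ⟪w k, y - w k⟫)| := by
      simp only [hg, max_comm (0 : ℝ)]
      exact abs_max_sub_max_le_abs _ _ _
    have h2 : (v k + c * ⟪w k, x - w k⟫) - (v k + c * ⟪w k, y - w k⟫)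
        = c * ⟪w k, x - y⟫ := by
      rw [inner_sub_right, inner_sub_right, inner_sub_right]; ring
    have h3 : |c * ⟪w k, x - y⟫| ≤ l * ‖x - y‖ := by
      rw [abs_mul, abs_of_pos hc]
      calc c * |⟪w k, x - y⟫| ≤ c * (‖w k‖ * ‖x - y‖) :=
            mul_le_mul_of_nonneg_left (abs_real_inner_le_norm _ _) hc.le
        _ = l * ‖x - y‖ := by rw [hw k, hcdef]; field_simp
    have := (abs_sub_le_iff.mp (h2 ▸ h1 |>.trans h3)).1
    linarith
  refine ⟨?_, ?_, ?_⟩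
  · refine ⟨convex_univ, ?_⟩
    intro x _ y _ a b ha hb hab
    rw [hFg]
    refine ciSup_le fun k => ?_
    have hgk : g k (a • x + b • y) ≤ a * g k x + b * g k y := by
      simp only [hg, haff k x y a b hab]
      refine max_le ?_ ?_
      · positivity
      · have h1 : v k + c * (a * ⟪w k, x - w k⟫ + b * ⟪w k, y - w k⟫)
            = a * (v k + c * ⟪w k, x - w k⟫) + b * (v k + c * ⟪w k, y - w k⟫) := by
          have hb1 : b = 1 - a := by linarith
          subst hb1; ring
        rw [h1]
        gcongr <;> exact le_max_right _ _
    refine hgk.trans ?_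
    have hx : g k x ≤ F x := hFg x ▸ le_ciSup (hbdd x) k
    have hy : g k y ≤ F y := hFg y ▸ le_ciSup (hbdd y) k
    have := add_le_add (mul_le_mul_of_nonneg_left hx ha) (mul_le_mul_of_nonneg_left hy hb)
    simpa using this
  · intro x y
    have key : ∀ x y : EuclideanSpace ℝ (Fin d), F x - F y ≤ l * ‖x - y‖ := by
      intro x y
      rw [hFg x, hFg y, sub_le_iff_le_add]
      refine ciSup_le fun k => (hlip k x y).trans ?_
      have : g k y ≤ ⨆ k, g k y := le_ciSup (hbdd y) k
      linarith
    have h1 := key x y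
    have h2 := key y x
    rw [norm_sub_rev] at h2
    exact abs_sub_le_iff.mpr ⟨h1, h2⟩
  · intro k
    rw [hFg]
    have hvk : 0 < v k := lt_trans (by positivity) (hv k).1
    have hgk : g k (w k) = v k := by
      simp only [hg, sub_self, inner_zero_right, mul_zero, add_zero]
      exact max_eq_right hvk.le
    refine le_antisymm (ciSup_le ?_) (hgk ▸ le_ciSup (hbdd (w k)) k)
    intro k'
    by_cases hkk : k' = k
    · subst hkk; exact hgk.le
    · have hsep' : ⟪w k - w k', w k'⟫ < -θ * r := hsep k' k (fun h => hkk h.symm)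
      have hinner : ⟪w k', w k - w k'⟫ < -θ * r := by
        rwa [real_inner_comm]
      have hmul : c * ⟪w k', w k - w k'⟫ < c * (-θ * r) :=
        mul_lt_mul_of_pos_left hinner hc
      have hcr : c * (-θ * r) = -(l * θ) := by
        rw [hcdef]; field_simp
      have hterm : v k' + c * ⟪w k', w k - w k'⟫ ≤ 0 := by
        have := (hv k').2
        nlinarith
      simp only [hg]
      rw [max_eq_left hterm]
      exact hvk.le
end

section
/- Let w_1, …, w_K ∈ ℝ^d, v_1, …, v_K ∈ ℝ, and l ≥ 0. Define g : ℝ^d → ℝ ∪ {+∞} by g(x) = inf { Σ_{i=1}^K μ_i (v_i + l ‖z_i - w_i‖) : μ ∈ Δ^K, z_1, …, z_K ∈ ℝ^d, Σ_{i=1}^K μ_i z_i = x }. Then for every x ∈ ℝ^d, g(x) ≥ min_{1 ≤ i ≤ K} v_i + l · dist(x, convexHull{w_1, …, w_K}). -/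
/-- Lower bound on the convex hull of the functions
`x ↦ v_i + l‖x - w_i‖`: the function
`g x = inf { ∑ μ_i (v_i + l‖z_i - w_i‖) : μ ∈ Δ^K, ∑ μ_i z_i = x }`
(valued in `ℝ ∪ {+∞}`, modeled by `EReal` with `sInf ∅ = +∞`) satisfies
`g x ≥ min_i v_i + l · dist(x, conv{w_1, …, w_K})`. -/
theorem stmt12 {d K : ℕ} (hK : 0 < K)
    (w : Fin K → EuclideanSpace ℝ (Fin d)) (v : Fin K → ℝ) (l : ℝ) (hl : 0 ≤ l)
    (g : EuclideanSpace ℝ (Fin d) → EReal)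
    (hg : ∀ x, g x = sInf {t : EReal |
      ∃ (μ : Fin K → ℝ) (z : Fin K → EuclideanSpace ℝ (Fin d)),
        (∀ i, 0 ≤ μ i) ∧ (∑ i, μ i = 1) ∧ (∑ i, μ i • z i = x) ∧
        t = ((∑ i, μ i * (v i + l * ‖z i - w i‖) : ℝ) : EReal)}) :
    ∀ x, (((⨅ i, v i) + l * Metric.infDist x (convexHull ℝ (Set.range w)) : ℝ) : EReal)
      ≤ g x := by
  intro x
  rw [hg]
  apply le_sInf
  rintro t ⟨μ, z, hμ0, hμ1, hzx, rfl⟩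
  rw [EReal.coe_le_coe_iff]
  haveI : Nonempty (Fin K) := ⟨⟨0, hK⟩⟩
  set y : EuclideanSpace ℝ (Fin d) := ∑ i, μ i • w i with hy
  have hymem : y ∈ convexHull ℝ (Set.range w) := by
    apply (convex_convexHull ℝ (Set.range w)).sum_mem (fun i _ => hμ0 i) hμ1
    intro i _
    exact subset_convexHull ℝ _ ⟨i, rfl⟩
  have hdist : Metric.infDist x (convexHull ℝ (Set.range w)) ≤ ∑ i, μ i * ‖z i - w i‖ := by
    refine le_trans (Metric.infDist_le_dist_of_mem hymem) ?_
    rw [dist_eq_norm]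
    have : x - y = ∑ i, μ i • (z i - w i) := by
      rw [← hzx, hy, ← Finset.sum_sub_distrib]
      congr 1; ext i; rw [smul_sub]
    rw [this]
    refine le_trans (norm_sum_le _ _) ?_
    apply Finset.sum_le_sum
    intro i _
    rw [norm_smul, Real.norm_eq_abs, abs_of_nonneg (hμ0 i)]
  have hinf : (⨅ i, v i) ≤ ∑ i, μ i * v i := by
    calc (⨅ i, v i) = ∑ i, μ i * (⨅ j, v j) := by
          rw [← Finset.sum_mul, hμ1, one_mul]
      _ ≤ ∑ i, μ i * v i := by
          apply Finset.sum_le_sum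
          intro i _
          exact mul_le_mul_of_nonneg_left (ciInf_le (Finite.bddBelow_range v) i) (hμ0 i)
  calc (⨅ i, v i) + l * Metric.infDist x (convexHull ℝ (Set.range w))
      ≤ (∑ i, μ i * v i) + l * ∑ i, μ i * ‖z i - w i‖ :=
        add_le_add hinf (mul_le_mul_of_nonneg_left hdist hl)
    _ = ∑ i, μ i * (v i + l * ‖z i - w i‖) := by
        rw [Finset.mul_sum, ← Finset.sum_add_distrib]
        congr 1; ext i; ring
end
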